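/- arXiv:2509.02755 — 2 statements merged into one kernel-verified Lean document; each statement's English description precedes it below -/
import Mathlib

section
/- Let (X,d) be a metric space equipped additionally with a pseudometric ρ. Suppose X = X₁ ∪ ⋯ ∪ Xₙ for finitely many closed subsets Xᵢ such that ρ = d when restricted to Xᵢ × Xᵢ for each i. Then the intrinsic pseudometric induced by ρ equals the intrinsic metric induced by d, and both are ≥ d. -/
open unitInterval

noncomputable section

variable {X : Type*}

/-- A pseudometric: zero on the diagonal, symmetric, triangle inequality. -/
def IsPseudometric (m : X → X → ℝ) : Prop :=
  (∀ x, m x x = 0) ∧ (∀ x y, m x y = m y x) ∧ (∀ x y z, m x z ≤ m x y + m y z)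

/-- A partition 0 = t₀ ≤ ⋯ ≤ tₙ = 1 of the unit interval. -/
def IsPartition {n : ℕ} (t : Fin (n + 1) → I) : Prop :=
  Monotone t ∧ t 0 = 0 ∧ t (Fin.last n) = 1

/-- The sum Σᵢ m(γ(tᵢ₋₁), γ(tᵢ)) over a partition. -/
def partSum (m : X → X → ℝ) (γ : I → X) {n : ℕ} (t : Fin (n + 1) → I) : ℝ :=
  ∑ i : Fin n, m (γ (t i.castSucc)) (γ (t i.succ))

/-- The length of a path with respect to a pseudometric: the supremum of Σ m over partitions. -/
def pathLength (m : X → X → ℝ) (γ : I → X) : ENNReal :=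
  ⨆ (n : ℕ) (t : {t : Fin (n + 1) → I // IsPartition t}), ENNReal.ofReal (partSum m γ t.1)

/-- The intrinsic pseudometric induced by `m`: the infimum of path lengths over
continuous paths from `x` to `y` (`⊤` if there is no such path). -/
def intrinsicDist [TopologicalSpace X] (m : X → X → ℝ) (x y : X) : ENNReal :=
  ⨅ (γ : {γ : I → X // Continuous γ ∧ γ 0 = x ∧ γ 1 = y}), pathLength m γ.1

/-!
Both intrinsic metrics are infima of path lengths over the same continuous paths, so it suffices
to show `L_ρ γ = L_d γ` for each such path `γ`. Because the `Xᵢ` are finitely many and closed,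
every parameter `u` has a neighbourhood of parameters `v` for which `γ u` and `γ v` lie in a
common `Xᵢ`, so that `ρ` and `d` agree on `(γ u, γ v)`. A supremum argument on `[0, 1]` joins any
`a ≤ b` by a monotone chain whose consecutive pairs are of this kind. Refining a partition by such
chains can only increase its `ρ`-sum (triangle inequality), and on the refined partition the `ρ`-
and `d`-sums coincide; by symmetry of the argument `L_ρ γ = L_d γ`. The bound `d ≤ d̂` is the
one-step partition `0 ≤ 1`.
-/

open Filter Topology List Relation

section ChainSum

variable {α : Type*}

def chainSum (F : α → α → ℝ) : α → List α → ℝ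
  | _, [] => 0
  | a, b :: l => F a b + chainSum F b l

theorem chainSum_append (F : α → α → ℝ) (a : α) (l₁ l₂ : List α) :
    chainSum F a (l₁ ++ l₂) =
      chainSum F a l₁ + chainSum F ((a :: l₁).getLast (cons_ne_nil _ _)) l₂ := by
  induction l₁ generalizing a with
  | nil => simp [chainSum]
  | cons b l ih => simp [chainSum, ih, add_assoc]

theorem chainSum_congr {F G : α → α → ℝ} {a : α} {l : List α}
    (h : IsChain (fun u v => F u v = G u v) (a :: l)) : chainSum F a l = chainSum G a l := by
  induction l generalizing a with
  | nil => rfl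
  | cons b l ih =>
    rw [isChain_cons_cons] at h
    simp [chainSum, h.1, ih h.2]

variable {F : α → α → ℝ}

theorem Relation.ReflTransGen.exists_isChain_le_chainSum (hF₀ : ∀ a, F a a = 0)
    (hF : ∀ a b c, F a c ≤ F a b + F b c) {S : α → α → Prop} {a b : α}
    (h : ReflTransGen S a b) :
    ∃ l, IsChain S (a :: l) ∧ (a :: l).getLast (cons_ne_nil _ _) = b ∧
      F a b ≤ chainSum F a l := by
  induction h using ReflTransGen.head_induction_on with
  | refl => exact ⟨[], .singleton _, rfl, (hF₀ b).le⟩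
  | head hac _ ih =>
    obtain ⟨l, hl, hlast, hsum⟩ := ih
    refine ⟨_ :: l, hl.cons_cons hac, by rwa [getLast_cons_cons], ?_⟩
    exact (hF _ _ _).trans (by simp only [chainSum]; linarith)

theorem List.IsChain.exists_refinement_chainSum_le (hF₀ : ∀ a, F a a = 0)
    (hF : ∀ a b c, F a c ≤ F a b + F b c) {r S : α → α → Prop}
    (hrS : ∀ a b, r a b → ReflTransGen S a b) {a : α} {l : List α} (hl : IsChain r (a :: l)) :
    ∃ l', IsChain S (a :: l') ∧
      (a :: l').getLast (cons_ne_nil _ _) = (a :: l).getLast (cons_ne_nil _ _) ∧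
      chainSum F a l ≤ chainSum F a l' := by
  induction l generalizing a with
  | nil => exact ⟨[], .singleton _, rfl, le_rfl⟩
  | cons b l ih =>
    rw [isChain_cons_cons] at hl
    obtain ⟨c, hc, hclast, hcsum⟩ := (hrS a b hl.1).exists_isChain_le_chainSum hF₀ hF
    obtain ⟨l', hl', hlast', hsum'⟩ := ih hl.2
    refine ⟨c ++ l', ?_, ?_, ?_⟩
    · rw [← cons_append, isChain_append, getLast?_eq_some_getLast (cons_ne_nil _ _), hclast]
      exact ⟨hc, hl'.tail, fun x hx y hy => (Option.mem_some_iff.mp hx) ▸ hl'.rel_head? hy⟩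
    · rw [getLast_cons_cons, ← hlast']
      cases l' with
      | nil => simpa using hclast
      | cons d l' => simp
    · rw [chainSum_append, hclast]
      simp only [chainSum]
      linarith

end ChainSum

theorem reflTransGen_of_forall_eventually_nhds {α : Type*} [ConditionallyCompleteLinearOrder α]
    [TopologicalSpace α] [OrderTopology α] [DenselyOrdered α] {R : α → α → Prop}
    (hR : ∀ u, ∀ᶠ v in 𝓝 u, R u v ∧ R v u) {a b : α} (hab : a ≤ b) :
    ReflTransGen (fun u v => u ≤ v ∧ R u v) a b := by
  set A := {t | t ≤ b ∧ ReflTransGen (fun u v => u ≤ v ∧ R u v) a t}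
  have haA : a ∈ A := ⟨hab, .refl⟩
  have hbdd : BddAbove A := ⟨b, fun _ ht => ht.1⟩
  have hac : a ≤ sSup A := le_csSup hbdd haA
  have hcb : sSup A ≤ b := csSup_le ⟨a, haA⟩ fun _ ht => ht.1
  have hc : ReflTransGen (fun u v => u ≤ v ∧ R u v) a (sSup A) := by
    rcases hac.eq_or_lt with h | h
    · exact h ▸ .refl
    obtain ⟨l, hl, hlR⟩ := exists_Ioc_subset_of_mem_nhds ((hR _).mono fun _ h => h.2) ⟨a, h⟩
    obtain ⟨t, htA, hlt⟩ := exists_lt_of_lt_csSup ⟨a, haA⟩ hl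
    have htc : t ≤ sSup A := le_csSup hbdd htA
    exact htA.2.tail ⟨htc, hlR ⟨hlt, htc⟩⟩
  suffices sSup A = b from this ▸ hc
  refine hcb.eq_of_not_lt fun hlt => ?_
  obtain ⟨u, hu, huR⟩ := exists_Ico_subset_of_mem_nhds ((hR _).mono fun _ h => h.1) ⟨b, hlt⟩
  obtain ⟨v, hcv, hv⟩ := exists_between (lt_min hu hlt)
  have hvA : v ∈ A := ⟨hv.le.trans (min_le_right _ _),
    hc.tail ⟨hcv.le, huR ⟨hcv.le, hv.trans_le (min_le_left _ _)⟩⟩⟩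
  exact (le_csSup hbdd hvA).not_gt hcv

theorem eventually_nhds_exists_mem_and_mem {X ι : Type*} [TopologicalSpace X] [Finite ι]
    {C : ι → Set X} (hclosed : ∀ i, IsClosed (C i)) (hcover : ⋃ i, C i = Set.univ) (x : X) :
    ∀ᶠ y in 𝓝 x, ∃ i, x ∈ C i ∧ y ∈ C i := by
  have : ∀ᶠ y in 𝓝 x, ∀ i, x ∉ C i → y ∉ C i :=
    eventually_all.2 fun i => by
      by_cases hx : x ∈ C i
      · exact .of_forall fun _ h => (h hx).elim
      · exact ((hclosed i).isOpen_compl.eventually_mem hx).mono fun _ hy _ => hy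
  filter_upwards [this] with y hy
  obtain ⟨i, hi⟩ := Set.mem_iUnion.1 (hcover ▸ Set.mem_univ y)
  exact ⟨i, not_not.1 fun hx => hy i hx hi, hi⟩

theorem partSum_eq_chainSum (m : X → X → ℝ) (γ : I → X) {n : ℕ} (t : Fin (n + 1) → I) :
    partSum m γ t = chainSum (fun u v => m (γ u) (γ v)) (t 0) (ofFn fun i => t i.succ) := by
  induction n with
  | zero => simp [partSum, chainSum]
  | succ n ih =>
    rw [ofFn_succ, chainSum, ← ih (fun i => t i.succ), partSum, partSum, Fin.sum_univ_succ]
    rfl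

theorem ofReal_partSum_le_pathLength (m : X → X → ℝ) (γ : I → X) {n : ℕ}
    {t : Fin (n + 1) → I} (ht : IsPartition t) :
    ENNReal.ofReal (partSum m γ t) ≤ pathLength m γ :=
  le_iSup_of_le n <| le_iSup_of_le ⟨t, ht⟩ le_rfl

theorem ofReal_chainSum_le_pathLength (m : X → X → ℝ) (γ : I → X) {l : List I}
    (hl : IsChain (· ≤ ·) (0 :: l)) (hlast : (0 :: l).getLast (cons_ne_nil _ _) = 1) :
    ENNReal.ofReal (chainSum (fun u v => m (γ u) (γ v)) 0 l) ≤ pathLength m γ := by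
  set t : Fin (l.length + 1) → I := (0 :: l).get
  have hofFn : ofFn t = 0 :: l := ofFn_get _
  have ht : IsPartition t := by
    refine ⟨hl.sortedLE, rfl, ?_⟩
    rw [← hlast, getLast_eq_getElem]
    rfl
  rw [ofFn_succ, cons.injEq] at hofFn
  calc ENNReal.ofReal (chainSum (fun u v => m (γ u) (γ v)) 0 l)
      = ENNReal.ofReal (partSum m γ t) := by rw [partSum_eq_chainSum, hofFn.2]; rfl
    _ ≤ pathLength m γ := ofReal_partSum_le_pathLength m γ ht

theorem ofReal_le_pathLength (m : X → X → ℝ) (γ : I → X) :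
    ENNReal.ofReal (m (γ 0) (γ 1)) ≤ pathLength m γ := by
  simpa [chainSum] using ofReal_chainSum_le_pathLength m γ (l := [1]) (by simp) rfl

theorem pathLength_le_of_eventually_eq {m₁ m₂ : X → X → ℝ} (h₁ : IsPseudometric m₁)
    {γ : I → X} (h : ∀ u, ∀ᶠ v in 𝓝 u,
      m₁ (γ u) (γ v) = m₂ (γ u) (γ v) ∧ m₁ (γ v) (γ u) = m₂ (γ v) (γ u)) :
    pathLength m₁ γ ≤ pathLength m₂ γ := by
  obtain ⟨h₀, -, htri⟩ := h₁
  refine iSup₂_le fun n ⟨t, hmono, ht₀, ht₁⟩ => ?_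
  have hsorted : IsChain (· ≤ ·) (ofFn t) := hmono.sortedLE_ofFn.isChain
  have hend : (ofFn t).getLast (by simp) = 1 := by
    rw [getLast_ofFn]
    convert ht₁
    simp
  simp only [ofFn_succ] at hsorted hend
  obtain ⟨l, hl, hlast, hsum⟩ := hsorted.exists_refinement_chainSum_le
    (F := fun u v => m₁ (γ u) (γ v)) (fun a => h₀ (γ a)) (fun a b c => htri _ (γ b) _)
    (fun a b hab => reflTransGen_of_forall_eventually_nhds h hab)
  replace hlast := hlast.trans hend
  rw [← partSum_eq_chainSum, ht₀] at hsum
  rw [ht₀] at hl hlast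
  calc ENNReal.ofReal (partSum m₁ γ t)
      ≤ ENNReal.ofReal (chainSum (fun u v => m₁ (γ u) (γ v)) 0 l) :=
        ENNReal.ofReal_le_ofReal hsum
    _ = ENNReal.ofReal (chainSum (fun u v => m₂ (γ u) (γ v)) 0 l) := by
        rw [chainSum_congr (hl.imp fun _ _ h => h.2)]
    _ ≤ pathLength m₂ γ :=
        ofReal_chainSum_le_pathLength m₂ γ (hl.imp fun _ _ h => h.1) hlast

/-- if a metric space `X` is covered by finitely many closed sets on each of
which a pseudometric `ρ` agrees with the metric `d = dist`, then the intrinsic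
pseudometrics of `ρ` and `d` agree, and both dominate `d`. -/
theorem stmt0 {X : Type*} [MetricSpace X] (ρ : X → X → ℝ) (hρ : IsPseudometric ρ)
    (n : ℕ) (C : Fin n → Set X)
    (hclosed : ∀ i, IsClosed (C i))
    (hcover : (⋃ i, C i) = Set.univ)
    (hagree : ∀ i, ∀ x ∈ C i, ∀ y ∈ C i, ρ x y = dist x y) :
    (∀ x y : X, intrinsicDist ρ x y = intrinsicDist (fun a b => dist a b) x y) ∧
    (∀ x y : X, ENNReal.ofReal (dist x y) ≤ intrinsicDist (fun a b => dist a b) x y) := by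
  have hd : IsPseudometric (fun a b : X => dist a b) := ⟨dist_self, dist_comm, dist_triangle⟩
  refine ⟨fun x y => iInf_congr fun γ => ?_, fun x y => le_iInf fun γ => ?_⟩
  · have h : ∀ u, ∀ᶠ v in 𝓝 u, ρ (γ.1 u) (γ.1 v) = dist (γ.1 u) (γ.1 v) ∧
        ρ (γ.1 v) (γ.1 u) = dist (γ.1 v) (γ.1 u) := fun u =>
      (γ.2.1.tendsto u).eventually (eventually_nhds_exists_mem_and_mem hclosed hcover _) |>.mono
        fun _ ⟨i, hu, hv⟩ => ⟨hagree i _ hu _ hv, hagree i _ hv _ hu⟩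
    exact le_antisymm (pathLength_le_of_eventually_eq hρ h)
      (pathLength_le_of_eventually_eq hd fun u => (h u).mono fun _ h => ⟨h.1.symm, h.2.symm⟩)
  · obtain ⟨-, h₀, h₁⟩ := γ.2
    simpa only [h₀, h₁] using ofReal_le_pathLength _ γ.1
end
end

section
/- Let (X,d) be a metric space covered by finitely many closed sets X₁,…,Xₙ. Then for any continuous path γ:[0,1]→X there exists a partition 0 = s₀ ≤ s₁ ≤ ⋯ ≤ sₘ = 1 with m ≤ n such that for each i=1,…,m, both γ(sᵢ₋₁) and γ(sᵢ) lie in a common set X_{j(i)}. -/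
open unitInterval

noncomputable section

variable {X : Type*}

/-!
Greedy construction: from a time `t`, jump to the last time `t'` at which `γ` meets a covering set
that also contains `γ t` (it exists since the sets are closed). If `t < 1` then `t < t'`: otherwise
just after `t` the path stays in the closed union of the sets missing `γ t`, hence so does `γ t`.
Along the iterates `0 = t₀ < t₁ < ⋯`, the sets linking `tₖ` to `tₖ₊₁` are pairwise distinct, since a
set containing `γ tₖ` is never met after `tₖ₊₁`. So with `n` sets the iterates reach `1` within
`n` steps.
-/

open Set

section

variable {ι : Type*} (C : ι → Set X) (γ : I → X)

def linkedTimes (t : I) : Set I :=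
  {u | t ≤ u ∧ ∃ j, γ t ∈ C j ∧ γ u ∈ C j}

def lastLinked (t : I) : I :=
  sSup (linkedTimes C γ t)

def greedyPartition (k : ℕ) : I :=
  (lastLinked C γ)^[k] 0

variable {C γ}

theorem greedyPartition_succ (k : ℕ) :
    greedyPartition C γ (k + 1) = lastLinked C γ (greedyPartition C γ k) :=
  Function.iterate_succ_apply' _ _ _

theorem notMem_of_lastLinked_lt {t u : I} (hu : lastLinked C γ t < u) {j : ι} (ht : γ t ∈ C j) :
    γ u ∉ C j := fun hu' ↦
  have hlink : t ≤ lastLinked C γ t := le_sSup ⟨le_rfl, j, ht, ht⟩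
  hu.not_ge <| le_sSup (show u ∈ linkedTimes C γ t from ⟨hlink.trans hu.le, j, ht, hu'⟩)

theorem self_mem_linkedTimes (hcover : ⋃ j, C j = univ) (t : I) : t ∈ linkedTimes C γ t :=
  have ⟨j, hj⟩ := iUnion_eq_univ_iff.1 hcover (γ t)
  ⟨le_rfl, j, hj, hj⟩

theorem le_lastLinked (hcover : ⋃ j, C j = univ) (t : I) : t ≤ lastLinked C γ t :=
  le_sSup (self_mem_linkedTimes hcover t)

theorem monotone_greedyPartition (hcover : ⋃ j, C j = univ) : Monotone (greedyPartition C γ) :=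
  monotone_nat_of_le_succ fun k ↦ (greedyPartition_succ k).symm ▸ le_lastLinked hcover _

variable [TopologicalSpace X]

theorem isClosed_linkedTimes [Finite ι] (hC : ∀ j, IsClosed (C j)) (hγ : Continuous γ) (t : I) :
    IsClosed (linkedTimes C γ t) := by
  have : linkedTimes C γ t = Ici t ∩ ⋃ j, ⋃ (_ : γ t ∈ C j), γ ⁻¹' C j := by
    ext u; simp [linkedTimes]
  rw [this]
  exact isClosed_Ici.inter <| isClosed_iUnion_of_finite fun j ↦
    isClosed_iUnion_of_finite fun _ ↦ (hC j).preimage hγ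

theorem lastLinked_mem [Finite ι] (hC : ∀ j, IsClosed (C j)) (hcover : ⋃ j, C j = univ)
    (hγ : Continuous γ) (t : I) : lastLinked C γ t ∈ linkedTimes C γ t :=
  (isClosed_linkedTimes hC hγ t).sSup_mem ⟨t, self_mem_linkedTimes hcover t⟩

theorem lt_lastLinked [Finite ι] (hC : ∀ j, IsClosed (C j)) (hcover : ⋃ j, C j = univ)
    (hγ : Continuous γ) {t : I} (ht : t < 1) : t < lastLinked C γ t := by
  refine (le_lastLinked hcover t).lt_of_ne fun heq ↦ ?_
  set F := ⋃ j, ⋃ (_ : γ t ∉ C j), C j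
  have hF : IsClosed (γ ⁻¹' F) :=
    (isClosed_iUnion_of_finite fun j ↦ isClosed_iUnion_of_finite fun _ ↦ hC j).preimage hγ
  have hIoi : Ioi t ⊆ γ ⁻¹' F := fun u hu ↦ by
    obtain ⟨j, hj⟩ := iUnion_eq_univ_iff.1 hcover (γ u)
    have hjt : γ t ∉ C j := fun hjt ↦ notMem_of_lastLinked_lt (heq ▸ hu) hjt hj
    exact mem_iUnion₂.2 ⟨j, hjt, hj⟩
  have htF : t ∈ γ ⁻¹' F := by
    refine hF.closure_subset_iff.2 hIoi ?_
    rw [closure_Ioi' (a := t) ⟨1, ht⟩]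
    exact mem_Ici.2 le_rfl
  obtain ⟨j, hjt, hj⟩ := mem_iUnion₂.1 htF
  exact hjt hj

theorem exists_mem_greedyPartition [Finite ι] (hC : ∀ j, IsClosed (C j))
    (hcover : ⋃ j, C j = univ) (hγ : Continuous γ) (k : ℕ) :
    ∃ j, γ (greedyPartition C γ k) ∈ C j ∧ γ (greedyPartition C γ (k + 1)) ∈ C j := by
  rw [greedyPartition_succ]
  exact (lastLinked_mem hC hcover hγ _).2

theorem greedyPartition_lt_succ [Finite ι] (hC : ∀ j, IsClosed (C j))
    (hcover : ⋃ j, C j = univ) (hγ : Continuous γ) {k : ℕ} (hk : greedyPartition C γ k < 1) :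
    greedyPartition C γ k < greedyPartition C γ (k + 1) :=
  (greedyPartition_succ k).symm ▸ lt_lastLinked hC hcover hγ hk

theorem greedyPartition_card_eq_one [Finite ι] (hC : ∀ j, IsClosed (C j))
    (hcover : ⋃ j, C j = univ) (hγ : Continuous γ) : greedyPartition C γ (Nat.card ι) = 1 := by
  by_contra hne
  have hmono := monotone_greedyPartition (γ := γ) hcover
  choose w hw using fun k : Fin (Nat.card ι + 1) ↦ exists_mem_greedyPartition hC hcover hγ k
  have hw_inj : Function.Injective w := .of_lt_imp_ne fun k l hkl hwkl ↦ by
    have hl : greedyPartition C γ l < 1 :=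
      (hmono (Nat.lt_succ_iff.1 l.isLt)).trans_lt (le_one'.lt_of_ne hne)
    have hk : lastLinked C γ (greedyPartition C γ k) < greedyPartition C γ (l + 1) :=
      greedyPartition_succ (C := C) (γ := γ) k ▸
        (hmono (Nat.succ_le_of_lt hkl)).trans_lt (greedyPartition_lt_succ hC hcover hγ hl)
    exact notMem_of_lastLinked_lt hk (hw k).1 (hwkl ▸ (hw l).2)
  simpa using Nat.card_le_card_of_injective w hw_inj

end

/-- for a continuous path in a metric space covered by finitely many closed
sets, there is a partition with at most `n` pieces such that the two endpoints of each
piece lie in a common covering set. -/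
theorem stmt1 {X : Type*} [MetricSpace X]
    (n : ℕ) (C : Fin n → Set X)
    (hclosed : ∀ i, IsClosed (C i))
    (hcover : (⋃ i, C i) = Set.univ)
    (γ : I → X) (hγ : Continuous γ) :
    ∃ m : ℕ, m ≤ n ∧ ∃ s : Fin (m + 1) → I, IsPartition s ∧
      ∀ i : Fin m, ∃ j : Fin n, γ (s i.castSucc) ∈ C j ∧ γ (s i.succ) ∈ C j := by
  have hlast : greedyPartition C γ n = 1 := by
    simpa using greedyPartition_card_eq_one hclosed hcover hγ
  exact ⟨n, le_rfl, fun i ↦ greedyPartition C γ i,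
    ⟨fun a b hab ↦ monotone_greedyPartition hcover hab, rfl, hlast⟩,
    fun i ↦ exists_mem_greedyPartition hclosed hcover hγ i⟩
end
end
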